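/- arXiv:1208.1248 — 4 statements merged into one kernel-verified Lean document; each statement's English description precedes it below -/
import Mathlib

section
/- For every finite simple graph G on n ≥ 1 vertices there exists a family 𝒫 of partitions (V_C, V_I) of the vertex set V(G) (each partition given by a set V_C ⊆ V(G) with V_I = V(G) \ V_C) such that: (1) for every pair of disjoint sets X_C, X_I ⊆ V(G) where X_C is a clique of G and X_I is an independent set of G, there exists a partition (V_C, V_I) ∈ 𝒫 with X_C ⊆ V_C and X_I ⊆ V_I; and (2) |𝒫| ≤ 4 · (2n)^(2⌊log₂ n⌋ + 1). -/
def sepBound : ℕ → ℕ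
  | 0 => 1
  | (n+1) => 1 + (n+1) * sepBound ((n+1)/2)

lemma sepBound_eq (n : ℕ) (h : 0 < n) : sepBound n = 1 + n * sepBound (n/2) := by
  cases n with
  | zero => omega
  | succ m => simp [sepBound]

lemma key {V : Type*} [Fintype V] [DecidableEq V] (G : SimpleGraph V)
    [DecidableRel G.Adj] :
    ∀ n (S : Finset V), S.card ≤ n →
      ∃ P : Finset (Finset V),
        (∀ A ∈ P, A ⊆ S) ∧
        (∀ C I : Finset V, C ⊆ S → I ⊆ S → Disjoint C I →
          G.IsClique (C : Set V) → (I : Set V).Pairwise (fun u w => ¬ G.Adj u w) →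
          ∃ A ∈ P, C ⊆ A ∧ I ⊆ S \ A) ∧
        P.card ≤ sepBound n := by
  intro n
  induction n using Nat.strong_induction_on with
  | _ n IH =>
  intro S hS
  rcases Nat.eq_zero_or_pos n with h0 | hpos
  · subst h0
    have hSe : S = ∅ := Finset.card_eq_zero.mp (Nat.le_zero.mp hS)
    subst hSe
    refine ⟨{∅}, ?_, ?_, ?_⟩
    · intro A hA; simp at hA; simp [hA]
    · intro C I hC hI _ _ _
      refine ⟨∅, by simp, ?_, ?_⟩
      · simpa using hC
      · simpa using hI
    · simp [sepBound]
  · have hrec := IH (n/2) (Nat.div_lt_self hpos one_lt_two)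
    choose F hF1 hF2 hF3 using hrec
    set Nv : V → Finset V := fun v => S.filter (fun u => G.Adj v u) with hNvdef
    set Mv : V → Finset V := fun v => S.filter (fun u => u ≠ v ∧ ¬ G.Adj v u) with hMvdef
    have hNS : ∀ v, Nv v ⊆ S := fun v => Finset.filter_subset _ _
    have hMS : ∀ v, Mv v ⊆ S := fun v => Finset.filter_subset _ _
    have hlowcard : ∀ v, 2 * (Nv v).card < n → (Nv v).card ≤ n/2 := by
      intro v h; omega
    have hsum : ∀ v ∈ S, (Nv v).card + (Mv v).card + 1 ≤ n := by
      intro v hv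
      have hdisj : Disjoint (Nv v) (Mv v) := by
        rw [Finset.disjoint_left]
        intro u hu1 hu2
        simp only [hNvdef, hMvdef, Finset.mem_filter] at hu1 hu2
        exact hu2.2.2 hu1.2
      have hsub : Nv v ∪ Mv v ⊆ S.erase v := by
        intro u hu
        rcases Finset.mem_union.mp hu with h | h
        · simp only [hNvdef, Finset.mem_filter] at h
          exact Finset.mem_erase.mpr ⟨fun he => (G.irrefl (he ▸ h.2)), h.1⟩
        · simp only [hMvdef, Finset.mem_filter] at h
          exact Finset.mem_erase.mpr ⟨h.2.1, h.1⟩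
      have := Finset.card_le_card hsub
      rw [Finset.card_union_of_disjoint hdisj, Finset.card_erase_of_mem hv] at this
      have hS1 : 1 ≤ S.card := Finset.card_pos.mpr ⟨v, hv⟩
      omega
    have hhighcard : ∀ v ∈ S, ¬ (2 * (Nv v).card < n) → (Mv v).card ≤ n/2 := by
      intro v hv h
      have := hsum v hv
      omega
    let branch : V → Finset (Finset V) := fun v =>
      if h : v ∈ S then
        if hl : 2 * (Nv v).card < n then
          (F (Nv v) (hlowcard v hl)).image (fun A => insert v A)
        else
          (F (Mv v) (hhighcard v h hl)).image (fun A => A ∪ Nv v)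
      else ∅
    refine ⟨insert (S.filter (fun v => ¬ 2 * (Nv v).card < n)) (S.biUnion branch), ?_, ?_, ?_⟩
    · intro A hA
      rcases Finset.mem_insert.mp hA with h | h
      · subst h; exact Finset.filter_subset _ _
      · obtain ⟨v, hv, hA⟩ := Finset.mem_biUnion.mp h
        simp only [branch, dif_pos hv] at hA
        split_ifs at hA with hl
        · obtain ⟨A', hA', rfl⟩ := Finset.mem_image.mp hA
          exact Finset.insert_subset hv ((hF1 _ _ _ hA').trans (hNS v))
        · obtain ⟨A', hA', rfl⟩ := Finset.mem_image.mp hA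
          exact Finset.union_subset ((hF1 _ _ _ hA').trans (hMS v)) (hNS v)
    · intro C I hC hI hdisj hclique hindep
      by_cases hc1 : ∃ v ∈ C, 2 * (Nv v).card < n
      · obtain ⟨v, hv, hl⟩ := hc1
        have hvS : v ∈ S := hC hv
        have hC' : C.erase v ⊆ Nv v := by
          intro u hu
          have hu1 := Finset.mem_of_mem_erase hu
          have hne : u ≠ v := Finset.ne_of_mem_erase hu
          have : G.Adj v u := hclique (by exact_mod_cast hv) (by exact_mod_cast hu1) (Ne.symm hne)
          exact Finset.mem_filter.mpr ⟨hC hu1, this⟩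
        obtain ⟨A, hA, hCA, hIA⟩ := hF2 (Nv v) (hlowcard v hl) (C.erase v) (I ∩ Nv v)
          hC' (Finset.inter_subset_right) (hdisj.mono (Finset.erase_subset _ _) Finset.inter_subset_left)
          (hclique.subset (by exact_mod_cast Finset.erase_subset v C))
          (hindep.mono (by exact_mod_cast (Finset.inter_subset_left : I ∩ Nv v ⊆ I)))
        refine ⟨insert v A, ?_, ?_, ?_⟩
        · refine Finset.mem_insert_of_mem (Finset.mem_biUnion.mpr ⟨v, hvS, ?_⟩)
          simp only [branch, dif_pos hvS, dif_pos hl]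
          exact Finset.mem_image_of_mem _ hA
        · intro u hu
          rcases eq_or_ne u v with rfl | hne
          · exact Finset.mem_insert_self _ _
          · exact Finset.mem_insert_of_mem (hCA (Finset.mem_erase.mpr ⟨hne, hu⟩))
        · intro u hu
          refine Finset.mem_sdiff.mpr ⟨hI hu, ?_⟩
          intro hmem
          rcases Finset.mem_insert.mp hmem with rfl | hmem
          · exact (Finset.disjoint_left.mp hdisj hv) hu
          · have huN : u ∈ Nv v := hF1 _ _ _ hA hmem
            have := hIA (Finset.mem_inter.mpr ⟨hu, huN⟩)
            exact (Finset.mem_sdiff.mp this).2 hmem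
      · by_cases hc2 : ∃ v ∈ I, ¬ 2 * (Nv v).card < n
        · obtain ⟨v, hv, hl⟩ := hc2
          have hvS : v ∈ S := hI hv
          have hI' : I.erase v ⊆ Mv v := by
            intro u hu
            have hu1 := Finset.mem_of_mem_erase hu
            have hne : u ≠ v := Finset.ne_of_mem_erase hu
            have : ¬ G.Adj v u := hindep (by exact_mod_cast hv) (by exact_mod_cast hu1) (Ne.symm hne)
            exact Finset.mem_filter.mpr ⟨hI hu1, hne, this⟩
          obtain ⟨A, hA, hCA, hIA⟩ := hF2 (Mv v) (hhighcard v hvS hl) (C ∩ Mv v) (I.erase v)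
            (Finset.inter_subset_right) hI'
            (hdisj.mono Finset.inter_subset_left (Finset.erase_subset _ _))
            (hclique.subset (by exact_mod_cast (Finset.inter_subset_left : C ∩ Mv v ⊆ C)))
            (hindep.mono (by exact_mod_cast Finset.erase_subset v I))
          refine ⟨A ∪ Nv v, ?_, ?_, ?_⟩
          · refine Finset.mem_insert_of_mem (Finset.mem_biUnion.mpr ⟨v, hvS, ?_⟩)
            simp only [branch, dif_pos hvS, dif_neg hl]
            exact Finset.mem_image_of_mem _ hA
          · intro u hu
            by_cases hadj : G.Adj v u
            · exact Finset.mem_union_right _ (Finset.mem_filter.mpr ⟨hC hu, hadj⟩)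
            · have hne : u ≠ v := by
                rintro rfl
                exact (Finset.disjoint_left.mp hdisj hu) hv
              exact Finset.mem_union_left _ (hCA (Finset.mem_inter.mpr
                ⟨hu, Finset.mem_filter.mpr ⟨hC hu, hne, hadj⟩⟩))
          · intro u hu
            refine Finset.mem_sdiff.mpr ⟨hI hu, ?_⟩
            intro hmem
            have hnadj : ¬ G.Adj v u := by
              rcases eq_or_ne u v with rfl | hne
              · exact G.irrefl
              · exact hindep (by exact_mod_cast hv) (by exact_mod_cast hu) (Ne.symm hne)
            rcases Finset.mem_union.mp hmem with hmemA | hmemN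
            · rcases eq_or_ne u v with rfl | hne
              · have : u ∈ Mv u := hF1 _ _ _ hA hmemA
                simp [hMvdef] at this
              · have := hIA (Finset.mem_erase.mpr ⟨hne, hu⟩)
                exact (Finset.mem_sdiff.mp this).2 hmemA
            · exact hnadj (Finset.mem_filter.mp hmemN).2
        · push_neg at hc1 hc2
          refine ⟨S.filter (fun v => ¬ 2 * (Nv v).card < n), Finset.mem_insert_self _ _, ?_, ?_⟩
          · intro u hu
            exact Finset.mem_filter.mpr ⟨hC hu, not_lt.mpr (hc1 u hu)⟩
          · intro u hu
            refine Finset.mem_sdiff.mpr ⟨hI hu, ?_⟩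
            intro hmem
            exact (Finset.mem_filter.mp hmem).2 (hc2 u hu)
    · calc (insert (S.filter (fun v => ¬ 2 * (Nv v).card < n)) (S.biUnion branch)).card
          ≤ (S.biUnion branch).card + 1 := Finset.card_insert_le _ _
        _ ≤ (∑ v ∈ S, (branch v).card) + 1 := by
            exact Nat.add_le_add_right (Finset.card_biUnion_le) 1
        _ ≤ (∑ v ∈ S, sepBound (n/2)) + 1 := by
            refine Nat.add_le_add_right (Finset.sum_le_sum ?_) 1
            intro v hv
            simp only [branch, dif_pos hv]
            split_ifs with hl
            · exact (Finset.card_image_le).trans (hF3 _ _)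
            · exact (Finset.card_image_le).trans (hF3 _ _)
        _ = S.card * sepBound (n/2) + 1 := by rw [Finset.sum_const, smul_eq_mul]
        _ ≤ n * sepBound (n/2) + 1 := by
            exact Nat.add_le_add_right (Nat.mul_le_mul_right _ hS) 1
        _ = sepBound n := by rw [sepBound_eq n hpos]; ring

lemma sepBound_le : ∀ n, 1 ≤ n → sepBound n ≤ 4 * (2 * n) ^ (2 * Nat.log 2 n + 1) := by
  intro n
  induction n using Nat.strong_induction_on with
  | _ n IH =>
  intro hn1
  rcases Nat.lt_or_ge n 2 with h2 | h2
  · interval_cases n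
    · simp [sepBound]
  · have hd1 : 1 ≤ n / 2 := by omega
    have hdlt : n / 2 < n := Nat.div_lt_self (by omega) one_lt_two
    have hIH := IH (n/2) hdlt hd1
    set L := Nat.log 2 (n/2) with hL
    have hlog : Nat.log 2 n = L + 1 := by
      have h1 : Nat.log 2 (n/2) = Nat.log 2 n - 1 := Nat.log_div_base 2 n
      have h2' : 1 ≤ Nat.log 2 n := Nat.log_pos one_lt_two h2
      omega
    have hb : 2 * (n/2) ≤ n := Nat.mul_div_le n 2 |>.trans_eq (by ring) |>.trans (le_refl n)
    have hstep : sepBound (n/2) ≤ 4 * n ^ (2 * L + 1) := by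
      calc sepBound (n/2) ≤ 4 * (2 * (n/2)) ^ (2 * L + 1) := hIH
        _ ≤ 4 * n ^ (2 * L + 1) := by
            exact Nat.mul_le_mul_left 4 (Nat.pow_le_pow_left (by omega) _)
    rw [sepBound_eq n (by omega), hlog]
    have hpow : n ^ (2 * L + 1 + 1) ≥ 1 := Nat.one_le_pow _ _ (by omega)
    calc 1 + n * sepBound (n/2)
        ≤ 1 + n * (4 * n ^ (2 * L + 1)) := by
          exact Nat.add_le_add_left (Nat.mul_le_mul_left n hstep) 1
      _ = 1 + 4 * n ^ (2 * L + 2) := by ring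
      _ ≤ 5 * n ^ (2 * L + 2) := by
          have : 1 ≤ n ^ (2 * L + 2) := Nat.one_le_pow _ _ (by omega)
          omega
      _ ≤ 32 * n ^ (2 * L + 3) := by
          have h1 : n ^ (2 * L + 3) = n * n ^ (2 * L + 2) := by ring
          have h2' : n ^ (2 * L + 2) ≤ n ^ (2 * L + 3) := by
            rw [h1]
            exact Nat.le_mul_of_pos_left _ (by omega)
          omega
      _ ≤ 4 * (2 * n) ^ (2 * (L + 1) + 1) := by
          have he : 2 * (L + 1) + 1 = 2 * L + 3 := by ring
          rw [he, mul_pow]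
          have h8 : 8 ≤ 2 ^ (2 * L + 3) := by
            calc 8 = 2 ^ 3 := by norm_num
              _ ≤ 2 ^ (2 * L + 3) := Nat.pow_le_pow_right (by norm_num) (by omega)
          calc 32 * n ^ (2 * L + 3) = 4 * 8 * n ^ (2 * L + 3) := by ring
            _ ≤ 4 * 2 ^ (2 * L + 3) * n ^ (2 * L + 3) := by
                exact Nat.mul_le_mul_right _ (Nat.mul_le_mul_left 4 h8)
            _ = 4 * (2 ^ (2 * L + 3) * n ^ (2 * L + 3)) := by ring

/-- For every finite simple graph `G` on `n ≥ 1` vertices there is a family `P` of partitions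
of the vertex set, each given by its clique side `V_C` (with `V_I = V(G) \ V_C`), such that
every clique `X_C` and independent set `X_I` that are disjoint are separated by some member
of `P`, and `|P| ≤ 4 * (2n)^(2⌊log₂ n⌋ + 1)`. -/
theorem small_family_of_partitions {V : Type*} [Fintype V] [DecidableEq V]
    (G : SimpleGraph V) (n : ℕ) (hn : n = Fintype.card V) (hn1 : 1 ≤ n) :
    ∃ P : Finset (Finset V),
      (∀ X_C X_I : Finset V, Disjoint X_C X_I →
        G.IsClique (X_C : Set V) →
        (X_I : Set V).Pairwise (fun u w => ¬ G.Adj u w) →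
        ∃ V_C ∈ P, X_C ⊆ V_C ∧ X_I ⊆ Finset.univ \ V_C) ∧
      P.card ≤ 4 * (2 * n) ^ (2 * Nat.log 2 n + 1) := by
  haveI : DecidableRel G.Adj := Classical.decRel _
  obtain ⟨P, hP1, hP2, hP3⟩ := key G n Finset.univ (by rw [hn, Finset.card_univ])
  refine ⟨P, ?_, hP3.trans (sepBound_le n hn1)⟩
  intro XC XI hd hcl hind
  obtain ⟨A, hA, h1, h2⟩ := hP2 XC XI (Finset.subset_univ _) (Finset.subset_univ _) hd hcl hind
  exact ⟨A, hA, h1, h2⟩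
end

section
/- Let G be a finite simple graph on vertex set V and let k be a natural number. Let G' be the disjoint union of G and a complete graph on k + 2 vertices. Then G has a vertex cover of size at most k if and only if there exists a set S of vertices of G' with |S| ≤ k such that the subgraph of G' induced on V(G') \ S is a split graph. -/
/-- A simple graph is a split graph if its vertex set can be partitioned into a clique and an
independent set. -/
def SimpleGraph.IsSplitGraph {W : Type*} (H : SimpleGraph W) : Prop :=
  ∃ C I : Set W, Disjoint C I ∧ C ∪ I = Set.univ ∧
    H.IsClique C ∧ I.Pairwise (fun u w => ¬ H.Adj u w)

/-- `G` has a vertex cover of size at most `k` iff one can delete at most `k` vertices from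
the disjoint union of `G` and a complete graph on `k + 2` vertices so that the induced
subgraph on the remaining vertices is a split graph. -/
theorem vertexCover_iff_splitVertexDeletion {V : Type*} [Fintype V] [DecidableEq V]
    (G : SimpleGraph V) (k : ℕ) :
    (∃ T : Finset V, T.card ≤ k ∧ ∀ u w : V, G.Adj u w → u ∈ T ∨ w ∈ T) ↔
    (∃ S : Finset (V ⊕ Fin (k + 2)), S.card ≤ k ∧
      ((G ⊕g (⊤ : SimpleGraph (Fin (k + 2)))).induce ((S : Set (V ⊕ Fin (k + 2))))ᶜ).IsSplitGraph) := by
  constructor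
  · rintro ⟨T, hTcard, hTcover⟩
    refine ⟨T.image Sum.inl, le_trans (Finset.card_image_le) hTcard, ?_⟩
    refine ⟨{x | x.val.isRight}, {x | x.val.isLeft}, ?_, ?_, ?_, ?_⟩
    · rw [Set.disjoint_left]
      rintro ⟨x, hx⟩ h1 h2
      cases x <;> simp_all
    · ext ⟨x, hx⟩
      cases x <;> simp
    · rintro ⟨x, hx⟩ h1 ⟨y, hy⟩ h2 hne
      obtain ⟨a, rfl⟩ := Sum.isRight_iff.mp h1
      obtain ⟨b, rfl⟩ := Sum.isRight_iff.mp h2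
      have hab : a ≠ b := fun h => hne (by simp [h])
      show (G ⊕g (⊤ : SimpleGraph (Fin (k + 2)))).Adj (Sum.inr a) (Sum.inr b)
      simp [hab]
    · rintro ⟨x, hx⟩ h1 ⟨y, hy⟩ h2 hne hadj
      obtain ⟨u, rfl⟩ := Sum.isLeft_iff.mp h1
      obtain ⟨w, rfl⟩ := Sum.isLeft_iff.mp h2
      have hadj' : G.Adj u w := hadj
      rcases hTcover u w hadj' with h | h
      · exact hx (by simpa using h)
      · exact hy (by simpa using h)
  · rintro ⟨S, hScard, C, I, hdisj, huniv, hclique, hindep⟩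
    have hCI : ∀ x, x ∈ C ∨ x ∈ I := fun x => (Set.ext_iff.mp huniv x).mpr trivial
    have hsub : (Finset.univ.filter (fun x : Fin (k + 2) => Sum.inr x ∈ S)).card ≤ k := by
      calc (Finset.univ.filter (fun x : Fin (k + 2) => Sum.inr x ∈ S)).card
          ≤ S.card := Finset.card_le_card_of_injOn Sum.inr
            (by intro x hx; simpa using (Finset.mem_filter.mp hx).2)
            (fun _ _ _ _ h => Sum.inr.inj h)
        _ ≤ k := hScard
    have hbig : 2 ≤ (Finset.univ.filter (fun x : Fin (k + 2) => Sum.inr x ∉ S)).card := by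
      have := Finset.card_filter_add_card_filter_not
        (s := (Finset.univ : Finset (Fin (k + 2))))
        (p := fun x => Sum.inr x ∈ S)
      simp only [Finset.card_univ, Fintype.card_fin] at this
      omega
    obtain ⟨a, ha, b, hb, hab⟩ := Finset.one_lt_card.mp hbig
    have ha' : Sum.inr a ∉ S := by simpa using (Finset.mem_filter.mp ha).2
    have hb' : Sum.inr b ∉ S := by simpa using (Finset.mem_filter.mp hb).2
    have ha'' : (Sum.inr a : V ⊕ Fin (k + 2)) ∈ ((S : Set (V ⊕ Fin (k + 2))))ᶜ := ha'
    have hb'' : (Sum.inr b : V ⊕ Fin (k + 2)) ∈ ((S : Set (V ⊕ Fin (k + 2))))ᶜ := hb'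
    -- one of a, b lies in C
    have hC : ∃ (c : Fin (k + 2)) (hc : (Sum.inr c : V ⊕ Fin (k + 2)) ∈ ((S : Set (V ⊕ Fin (k + 2))))ᶜ),
        ⟨Sum.inr c, hc⟩ ∈ C := by
      rcases hCI ⟨Sum.inr a, ha''⟩ with h | hIa
      · exact ⟨a, ha'', h⟩
      rcases hCI ⟨Sum.inr b, hb''⟩ with h | hIb
      · exact ⟨b, hb'', h⟩
      exfalso
      refine hindep hIa hIb (by simp [hab]) ?_
      show (G ⊕g (⊤ : SimpleGraph (Fin (k + 2)))).Adj (Sum.inr a) (Sum.inr b)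
      simp [hab]
    obtain ⟨c, hc, hcC⟩ := hC
    -- V-side vertices in the complement are all in I
    have hVI : ∀ (v : V) (hv : (Sum.inl v : V ⊕ Fin (k + 2)) ∈ ((S : Set (V ⊕ Fin (k + 2))))ᶜ),
        ⟨Sum.inl v, hv⟩ ∈ I := by
      intro v hv
      rcases hCI ⟨Sum.inl v, hv⟩ with h' | h'
      · exfalso
        have := hclique h' hcC (by simp)
        have h2 : (G ⊕g (⊤ : SimpleGraph (Fin (k + 2)))).Adj (Sum.inl v) (Sum.inr c) := this
        simp at h2
      · exact h'
    refine ⟨Finset.univ.filter (fun v => Sum.inl v ∈ S), ?_, ?_⟩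
    · calc (Finset.univ.filter (fun v : V => Sum.inl v ∈ S)).card
          ≤ S.card := Finset.card_le_card_of_injOn Sum.inl
            (by intro x hx; simpa using (Finset.mem_filter.mp hx).2)
            (fun _ _ _ _ h => Sum.inl.inj h)
        _ ≤ k := hScard
    · intro u w hadj
      by_contra h
      push_neg at h
      obtain ⟨h1, h2⟩ := h
      simp only [Finset.mem_filter, Finset.mem_univ, true_and] at h1 h2
      have h1' : (Sum.inl u : V ⊕ Fin (k + 2)) ∈ ((S : Set (V ⊕ Fin (k + 2))))ᶜ := h1
      have h2' : (Sum.inl w : V ⊕ Fin (k + 2)) ∈ ((S : Set (V ⊕ Fin (k + 2))))ᶜ := h2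
      refine hindep (hVI u h1') (hVI w h2') (by simp [hadj.ne]) ?_
      show (G ⊕g (⊤ : SimpleGraph (Fin (k + 2)))).Adj (Sum.inl u) (Sum.inl w)
      exact hadj
end

section
/- Let G be a finite simple graph, let (V_C⁰, V_I⁰, A) be a partition of V(G) into three pairwise disjoint sets, and let X_C, X_I ⊆ V(G) be disjoint sets such that X_C is a clique of G, X_I is an independent set of G, X_C ⊆ V_C⁰ ∪ A, X_I ⊆ V_I⁰ ∪ A, and both X_C ∩ A and X_I ∩ A are nonempty. Then there exists a vertex v ∈ A such that one of the following holds: (a) v ∈ X_I ∩ A, the triple (V_C⁰ ∪ (A ∩ N_G(v)), V_I⁰ ∪ {v}, A \ N_G[v]) satisfies X_C ⊆ (V_C⁰ ∪ (A ∩ N_G(v))) ∪ (A \ N_G[v]) and X_I ⊆ (V_I⁰ ∪ {v}) ∪ (A \ N_G[v]), and 2·|X_C ∩ (A \ N_G[v])| < |X_C ∩ A|; or (b) v ∈ X_C ∩ A, the triple (V_C⁰ ∪ {v}, V_I⁰ ∪ (A \ N_G[v]), A ∩ N_G(v)) satisfies X_C ⊆ (V_C⁰ ∪ {v}) ∪ (A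 ∩ N_G(v)) and X_I ⊆ (V_I⁰ ∪ (A \ N_G[v])) ∪ (A ∩ N_G(v)), and 2·|X_I ∩ (A ∩ N_G(v))| ≤ |X_I ∩ A|. -/
open Finset

private lemma swap_count {V : Type*} [Fintype V] [DecidableEq V]
    (G : SimpleGraph V) [DecidableRel G.Adj] (S T : Finset V) :
    ∑ u ∈ S, (T ∩ G.neighborFinset u).card = ∑ v ∈ T, (S ∩ G.neighborFinset v).card := by
  have h1 : ∀ (S T : Finset V), ∀ u, (T ∩ G.neighborFinset u) = T.filter (fun v => G.Adj u v) := by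
    intro S T u
    ext v
    simp [SimpleGraph.mem_neighborFinset, and_comm]
  calc ∑ u ∈ S, (T ∩ G.neighborFinset u).card
      = ∑ u ∈ S, ∑ v ∈ T, (if G.Adj u v then 1 else 0) := by
        simp only [h1 S T, Finset.card_filter]
    _ = ∑ v ∈ T, ∑ u ∈ S, (if G.Adj v u then 1 else 0) := by
        rw [Finset.sum_comm]
        apply Finset.sum_congr rfl; intro v _
        apply Finset.sum_congr rfl; intro u _
        have h := G.adj_comm u v
        simp only [h]
    _ = ∑ v ∈ T, (S ∩ G.neighborFinset v).card := by
        simp only [h1 T S, Finset.card_filter]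

/-- In a promising state with both `X_C ∩ A` and `X_I ∩ A` nonempty, one can branch on some
vertex `v ∈ A` so that the resulting state is again promising and the size of `X_C ∩ A`
(respectively `X_I ∩ A`) is at least halved. -/
theorem exists_halving_branch {V : Type*} [Fintype V] [DecidableEq V]
    (G : SimpleGraph V) [DecidableRel G.Adj]
    (VC0 VI0 A : Finset V)
    (h1 : Disjoint VC0 VI0) (h2 : Disjoint VC0 A) (h3 : Disjoint VI0 A)
    (hcover : VC0 ∪ VI0 ∪ A = Finset.univ)
    (X_C X_I : Finset V) (hXdisj : Disjoint X_C X_I)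
    (hclique : G.IsClique (X_C : Set V))
    (hindep : (X_I : Set V).Pairwise (fun u w => ¬ G.Adj u w))
    (hC : X_C ⊆ VC0 ∪ A) (hI : X_I ⊆ VI0 ∪ A)
    (hCA : (X_C ∩ A).Nonempty) (hIA : (X_I ∩ A).Nonempty) :
    ∃ v ∈ A,
      (v ∈ X_I ∩ A ∧
        X_C ⊆ (VC0 ∪ (A ∩ G.neighborFinset v)) ∪ (A \ insert v (G.neighborFinset v)) ∧
        X_I ⊆ (insert v VI0) ∪ (A \ insert v (G.neighborFinset v)) ∧
        2 * (X_C ∩ (A \ insert v (G.neighborFinset v))).card < (X_C ∩ A).card) ∨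
      (v ∈ X_C ∩ A ∧
        X_C ⊆ (insert v VC0) ∪ (A ∩ G.neighborFinset v) ∧
        X_I ⊆ (VI0 ∪ (A \ insert v (G.neighborFinset v))) ∪ (A ∩ G.neighborFinset v) ∧
        2 * (X_I ∩ (A ∩ G.neighborFinset v)).card ≤ (X_I ∩ A).card) := by
  classical
  set S := X_C ∩ A with hS
  set T := X_I ∩ A with hT
  -- subset conditions (a) hold for any v ∈ X_I ∩ A
  have hsubA : ∀ v ∈ T,
      X_C ⊆ (VC0 ∪ (A ∩ G.neighborFinset v)) ∪ (A \ insert v (G.neighborFinset v)) ∧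
      X_I ⊆ (insert v VI0) ∪ (A \ insert v (G.neighborFinset v)) := by
    intro v hv
    have hvI : v ∈ X_I := (Finset.mem_inter.mp hv).1
    constructor
    · intro x hx
      rcases Finset.mem_union.mp (hC hx) with hx1 | hx1
      · exact Finset.mem_union_left _ (Finset.mem_union_left _ hx1)
      · have hxv : x ≠ v := fun h => (Finset.disjoint_left.mp hXdisj hx) (h ▸ hvI)
        by_cases hadj : G.Adj v x
        · exact Finset.mem_union_left _ (Finset.mem_union_right _
            (Finset.mem_inter.mpr ⟨hx1, (SimpleGraph.mem_neighborFinset G v x).mpr hadj⟩))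
        · refine Finset.mem_union_right _ (Finset.mem_sdiff.mpr ⟨hx1, ?_⟩)
          simp [hxv, (SimpleGraph.mem_neighborFinset G v x), hadj]
    · intro x hx
      rcases Finset.mem_union.mp (hI hx) with hx1 | hx1
      · exact Finset.mem_union_left _ (Finset.mem_insert_of_mem hx1)
      · by_cases hxv : x = v
        · exact Finset.mem_union_left _ (hxv ▸ Finset.mem_insert_self v VI0)
        · have hnadj : ¬ G.Adj v x := hindep (by simpa using hvI) (by simpa using hx) (Ne.symm hxv)
          refine Finset.mem_union_right _ (Finset.mem_sdiff.mpr ⟨hx1, ?_⟩)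
          simp [hxv, SimpleGraph.mem_neighborFinset, hnadj]
  -- subset conditions (b) hold for any v ∈ X_C ∩ A
  have hsubB : ∀ v ∈ S,
      X_C ⊆ (insert v VC0) ∪ (A ∩ G.neighborFinset v) ∧
      X_I ⊆ (VI0 ∪ (A \ insert v (G.neighborFinset v))) ∪ (A ∩ G.neighborFinset v) := by
    intro v hv
    have hvC : v ∈ X_C := (Finset.mem_inter.mp hv).1
    constructor
    · intro x hx
      rcases Finset.mem_union.mp (hC hx) with hx1 | hx1
      · exact Finset.mem_union_left _ (Finset.mem_insert_of_mem hx1)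
      · by_cases hxv : x = v
        · exact Finset.mem_union_left _ (hxv ▸ Finset.mem_insert_self v VC0)
        · have hadj : G.Adj v x := hclique (by simpa using hvC) (by simpa using hx) (Ne.symm hxv)
          exact Finset.mem_union_right _
            (Finset.mem_inter.mpr ⟨hx1, (SimpleGraph.mem_neighborFinset G v x).mpr hadj⟩)
    · intro x hx
      rcases Finset.mem_union.mp (hI hx) with hx1 | hx1
      · exact Finset.mem_union_left _ (Finset.mem_union_left _ hx1)
      · have hxv : x ≠ v := fun h => (Finset.disjoint_left.mp hXdisj hvC) (h ▸ hx)
        by_cases hadj : G.Adj v x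
        · exact Finset.mem_union_right _
            (Finset.mem_inter.mpr ⟨hx1, (SimpleGraph.mem_neighborFinset G v x).mpr hadj⟩)
        · refine Finset.mem_union_left _ (Finset.mem_union_right _ (Finset.mem_sdiff.mpr ⟨hx1, ?_⟩))
          simp [hxv, SimpleGraph.mem_neighborFinset, hadj]
  by_cases hcase : ∃ v ∈ T, 2 * (X_C ∩ (A \ insert v (G.neighborFinset v))).card < S.card
  · obtain ⟨v, hv, hlt⟩ := hcase
    exact ⟨v, (Finset.mem_inter.mp hv).2, Or.inl ⟨hv, (hsubA v hv).1, (hsubA v hv).2, hlt⟩⟩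
  · push_neg at hcase
    -- for all v ∈ T, 2 * (S ∩ N(v)).card ≤ S.card
    have key : ∀ v ∈ T, 2 * (S ∩ G.neighborFinset v).card ≤ S.card := by
      intro v hv
      have hvI : v ∈ X_I := (Finset.mem_inter.mp hv).1
      have hle := hcase v hv
      have heq : X_C ∩ (A \ insert v (G.neighborFinset v)) = S \ insert v (G.neighborFinset v) := by
        ext x; simp [hS, Finset.mem_sdiff, Finset.mem_inter]; tauto
      have heq2 : S ∩ insert v (G.neighborFinset v) = S ∩ G.neighborFinset v := by
        ext x
        simp only [Finset.mem_inter, Finset.mem_insert]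
        constructor
        · rintro ⟨hxS, hx | hx⟩
          · exact absurd ((Finset.mem_inter.mp hxS).1)
              (fun h => (Finset.disjoint_left.mp hXdisj h) (hx ▸ hvI))
          · exact ⟨hxS, hx⟩
        · rintro ⟨hxS, hx⟩; exact ⟨hxS, Or.inr hx⟩
      have hcard := Finset.card_sdiff_add_card_inter S (insert v (G.neighborFinset v))
      rw [heq] at hle
      rw [heq2] at hcard
      omega
    -- double count to find u ∈ S with 2 * (T ∩ N(u)).card ≤ T.card
    have hsum : 2 * ∑ u ∈ S, (T ∩ G.neighborFinset u).card ≤ T.card * S.card := by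
      rw [swap_count]
      calc 2 * ∑ v ∈ T, (S ∩ G.neighborFinset v).card
          = ∑ v ∈ T, 2 * (S ∩ G.neighborFinset v).card := by rw [Finset.mul_sum]
        _ ≤ ∑ _v ∈ T, S.card := Finset.sum_le_sum key
        _ = T.card * S.card := by rw [Finset.sum_const, smul_eq_mul]
    have hex : ∃ u ∈ S, 2 * (T ∩ G.neighborFinset u).card ≤ T.card := by
      by_contra hcon
      push_neg at hcon
      have : ∑ u ∈ S, (T.card + 1) ≤ ∑ u ∈ S, 2 * (T ∩ G.neighborFinset u).card :=
        Finset.sum_le_sum (fun u hu => hcon u hu)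
      rw [Finset.sum_const, smul_eq_mul] at this
      rw [Finset.mul_sum] at hsum
      have hSpos : 0 < S.card := Finset.card_pos.mpr hCA
      nlinarith
    obtain ⟨u, hu, hule⟩ := hex
    refine ⟨u, (Finset.mem_inter.mp hu).2, Or.inr ⟨hu, (hsubB u hu).1, (hsubB u hu).2, ?_⟩⟩
    have : X_I ∩ (A ∩ G.neighborFinset u) = T ∩ G.neighborFinset u := by
      rw [hT, Finset.inter_assoc]
    rw [this]
    exact hule
end

section
/- For every finite simple graph G on n ≥ 1 vertices and every pair of disjoint sets X_C, X_I ⊆ V(G) such that X_C is a clique of G and X_I is an independent set of G, there exists a sequence of at most 2⌊log₂ n⌋ + 1 triples (V_C⁰, V_I⁰, A), starting from (∅, ∅, V(G)), where each triple is a partition of V(G) into three pairwise disjoint sets satisfying X_C ⊆ V_C⁰ ∪ A and X_I ⊆ V_I⁰ ∪ A, each subsequent triple is obtained from the previous one (V_C⁰, V_I⁰, A) by choosing some v ∈ A and forming either (V_C⁰ ∪ {v}, V_I⁰ ∪ (A \ N_G[v]), A ∩ N_G(v)) or (V_C⁰ ∪ (A ∩ N_G(v)), V_I⁰ ∪ {v},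 A \ N_G[v]), and the final triple (V_C⁰, V_I⁰, A) satisfies X_C ∩ A = ∅ or X_I ∩ A = ∅. -/
/-!
Track a = |X_C ∩ A| and b = |X_I ∩ A|. While both are positive, double counting the edges
between X_C ∩ A and X_I ∩ A yields either a vertex v ∈ X_C ∩ A adjacent to at most half of
X_I ∩ A, or a vertex u ∈ X_I ∩ A adjacent to more than half of X_C ∩ A. Branching on v into the
clique side does not increase a and at least halves b; branching on u into the independent side
does not increase b and at least halves a. As X_C is a clique and X_I is independent, neither
branch moves a vertex of X_C or X_I to the wrong side. So at most ⌊log₂ a⌋ + ⌊log₂ b⌋ + 2 states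
occur, and this is at most 2⌊log₂ n⌋ + 1 since a + b ≤ n.
-/

open Finset

def branchingBound (a b : ℕ) : ℕ :=
  if a = 0 ∨ b = 0 then 1 else Nat.log 2 a + Nat.log 2 b + 2

theorem branchingBound_comm (a b : ℕ) : branchingBound a b = branchingBound b a := by
  simp only [branchingBound, or_comm, add_comm (Nat.log 2 a)]

theorem one_le_branchingBound (a b : ℕ) : 1 ≤ branchingBound a b := by
  unfold branchingBound
  split_ifs <;> omega

theorem Nat.log_two_add_one_le_of_two_mul_le {x y : ℕ} (hx : x ≠ 0) (h : 2 * x ≤ y) :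
    Nat.log 2 x + 1 ≤ Nat.log 2 y := by
  rw [← Nat.log_mul_base one_lt_two hx]
  exact Nat.log_mono_right (by omega)

theorem branchingBound_add_one_le {a b a' b' : ℕ} (ha : a ≠ 0) (hb : b ≠ 0)
    (ha' : a' ≤ a) (hb' : 2 * b' ≤ b) : branchingBound a' b' + 1 ≤ branchingBound a b := by
  have hab : ¬(a = 0 ∨ b = 0) := by omega
  unfold branchingBound
  rw [if_neg hab]
  split_ifs with h
  · omega
  · have := Nat.log_mono_right (b := 2) ha'
    have := Nat.log_two_add_one_le_of_two_mul_le (by omega) hb'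
    omega

theorem branchingBound_le_of_add_le {a b n : ℕ} (h : a + b ≤ n) :
    branchingBound a b ≤ 2 * Nat.log 2 n + 1 := by
  wlog hab : a ≤ b generalizing a b
  · rw [branchingBound_comm]; exact this (by omega) (by omega)
  unfold branchingBound
  split_ifs with h0
  · omega
  · have := Nat.log_two_add_one_le_of_two_mul_le (x := a) (by omega) (by omega : 2 * a ≤ n)
    have := Nat.log_mono_right (b := 2) (by omega : b ≤ n)
    omega

section

variable {V : Type*} [Fintype V] [DecidableEq V]

def IsTripartition (t : Finset V × Finset V × Finset V) : Prop :=
  Disjoint t.1 t.2.1 ∧ Disjoint t.1 t.2.2 ∧ Disjoint t.2.1 t.2.2 ∧ t.1 ∪ t.2.1 ∪ t.2.2 = univ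

theorem isTripartition_iff (C I A : Finset V) :
    IsTripartition (C, I, A) ↔ ∀ x, (x ∈ C ∧ x ∉ I ∧ x ∉ A) ∨ (x ∉ C ∧ x ∈ I ∧ x ∉ A) ∨
      (x ∉ C ∧ x ∉ I ∧ x ∈ A) := by
  simp only [IsTripartition, disjoint_left, eq_univ_iff_forall, mem_union]
  grind

def IsPromising (X_C X_I : Finset V) (t : Finset V × Finset V × Finset V) : Prop :=
  IsTripartition t ∧ X_C ⊆ t.1 ∪ t.2.2 ∧ X_I ⊆ t.2.1 ∪ t.2.2

def IsTerminal (X_C X_I : Finset V) (t : Finset V × Finset V × Finset V) : Prop :=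
  X_C ∩ t.2.2 = ∅ ∨ X_I ∩ t.2.2 = ∅

namespace SimpleGraph

variable (G : SimpleGraph V) [DecidableRel G.Adj]

def cliqueStep (v : V) (t : Finset V × Finset V × Finset V) : Finset V × Finset V × Finset V :=
  (insert v t.1, t.2.1 ∪ (t.2.2 \ insert v (G.neighborFinset v)), t.2.2 ∩ G.neighborFinset v)

def indepStep (v : V) (t : Finset V × Finset V × Finset V) : Finset V × Finset V × Finset V :=
  (t.1 ∪ (t.2.2 ∩ G.neighborFinset v), insert v t.2.1, t.2.2 \ insert v (G.neighborFinset v))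

def IsBranchingStep (t t' : Finset V × Finset V × Finset V) : Prop :=
  ∃ v ∈ t.2.2, t' = G.cliqueStep v t ∨ t' = G.indepStep v t

variable {G} {X_C X_I : Finset V} {t : Finset V × Finset V × Finset V} {v : V}

theorem IsBranchingStep.card_lt {t' : Finset V × Finset V × Finset V}
    (h : G.IsBranchingStep t t') : #t'.2.2 < #t.2.2 := by
  obtain ⟨v, hv, rfl | rfl⟩ := h
  · exact card_lt_card <| (ssubset_iff_of_subset inter_subset_left).2 ⟨v, hv, by simp⟩
  · exact card_lt_card <| (ssubset_iff_of_subset sdiff_subset).2 ⟨v, hv, by simp⟩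

theorem isTripartition_cliqueStep (ht : IsTripartition t) (hv : v ∈ t.2.2) :
    IsTripartition (G.cliqueStep v t) := by
  obtain ⟨C, I, A⟩ := t
  rw [isTripartition_iff] at ht ⊢
  intro x
  have hx := ht x
  have hv' := ht v
  have hvv := G.irrefl (v := v)
  simp only [cliqueStep, mem_insert, mem_union, mem_sdiff, mem_inter, mem_neighborFinset]
  grind

theorem isTripartition_indepStep (ht : IsTripartition t) (hv : v ∈ t.2.2) :
    IsTripartition (G.indepStep v t) := by
  obtain ⟨C, I, A⟩ := t
  rw [isTripartition_iff] at ht ⊢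
  intro x
  have hx := ht x
  have hv' := ht v
  have hvv := G.irrefl (v := v)
  simp only [indepStep, mem_insert, mem_union, mem_sdiff, mem_inter, mem_neighborFinset]
  grind

theorem isPromising_cliqueStep (hclique : G.IsClique (X_C : Set V)) (ht : IsPromising X_C X_I t)
    (hvC : v ∈ X_C) (hvI : v ∉ X_I) (hvA : v ∈ t.2.2) :
    IsPromising X_C X_I (G.cliqueStep v t) := by
  obtain ⟨htri, hC, hI⟩ := ht
  refine ⟨isTripartition_cliqueStep htri hvA, fun x hx => ?_, fun x hx => ?_⟩
  · have hxCA := hC hx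
    have hadj : x ≠ v → G.Adj v x := fun hne => hclique hvC hx hne.symm
    simp only [SimpleGraph.cliqueStep, mem_insert, mem_union, mem_inter, mem_neighborFinset] at *
    grind
  · have hxIA := hI hx
    have hxv : x ≠ v := by rintro rfl; exact hvI hx
    simp only [SimpleGraph.cliqueStep, mem_insert, mem_union, mem_sdiff, mem_inter,
      mem_neighborFinset] at *
    grind

theorem isPromising_indepStep (hindep : (X_I : Set V).Pairwise (fun u w => ¬ G.Adj u w))
    (ht : IsPromising X_C X_I t) (hvI : v ∈ X_I) (hvC : v ∉ X_C) (hvA : v ∈ t.2.2) :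
    IsPromising X_C X_I (G.indepStep v t) := by
  obtain ⟨htri, hC, hI⟩ := ht
  refine ⟨isTripartition_indepStep htri hvA, fun x hx => ?_, fun x hx => ?_⟩
  · have hxCA := hC hx
    have hxv : x ≠ v := by rintro rfl; exact hvC hx
    simp only [SimpleGraph.indepStep, mem_insert, mem_union, mem_sdiff, mem_inter,
      mem_neighborFinset] at *
    grind
  · have hxIA := hI hx
    have hnadj : x ≠ v → ¬ G.Adj v x := fun hne => hindep hvI hx hne.symm
    simp only [SimpleGraph.indepStep, mem_insert, mem_union, mem_sdiff, mem_neighborFinset] at *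
    grind

theorem exists_two_mul_card_inter_neighborFinset_le_or_lt (S T : Finset V) (hS : S.Nonempty) :
    (∃ v ∈ S, 2 * #(T ∩ G.neighborFinset v) ≤ #T) ∨
      ∃ u ∈ T, #S < 2 * #(S ∩ G.neighborFinset u) := by
  by_contra! h
  obtain ⟨hsparse, hdense⟩ := h
  have hcount : ∑ v ∈ S, #(T ∩ G.neighborFinset v) = ∑ u ∈ T, #(S ∩ G.neighborFinset u) := by
    have := sum_card_bipartiteAbove_eq_sum_card_bipartiteBelow (s := S) (t := T) (r := G.Adj)
    simpa [bipartiteAbove, bipartiteBelow, neighborFinset_eq_filter, inter_filter, G.adj_comm]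
      using this
  refine lt_irrefl (#S * #T) ?_
  calc #S * #T = ∑ v ∈ S, #T := by simp
    _ < ∑ v ∈ S, 2 * #(T ∩ G.neighborFinset v) := sum_lt_sum_of_nonempty hS hsparse
    _ = ∑ u ∈ T, 2 * #(S ∩ G.neighborFinset u) := by rw [← mul_sum, ← mul_sum, hcount]
    _ ≤ ∑ u ∈ T, #S := sum_le_sum hdense
    _ = #S * #T := by simp [mul_comm]

theorem exists_isBranchingStep_branchingBound_lt (hXdisj : Disjoint X_C X_I)
    (hclique : G.IsClique (X_C : Set V))
    (hindep : (X_I : Set V).Pairwise (fun u w => ¬ G.Adj u w))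
    (ht : IsPromising X_C X_I t) (hC : (X_C ∩ t.2.2).Nonempty) (hI : (X_I ∩ t.2.2).Nonempty) :
    ∃ t', G.IsBranchingStep t t' ∧ IsPromising X_C X_I t' ∧
      branchingBound #(X_C ∩ t'.2.2) #(X_I ∩ t'.2.2) + 1 ≤
        branchingBound #(X_C ∩ t.2.2) #(X_I ∩ t.2.2) := by
  obtain ⟨C, I, A⟩ := t
  dsimp only at hC hI ⊢
  rcases exists_two_mul_card_inter_neighborFinset_le_or_lt (G := G) _ (X_I ∩ A) hC with
    ⟨v, hv, hsparse⟩ | ⟨u, hu, hdense⟩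
  · obtain ⟨hvC, hvA⟩ := mem_inter.1 hv
    refine ⟨G.cliqueStep v (C, I, A), ⟨v, hvA, .inl rfl⟩,
      isPromising_cliqueStep hclique ht hvC (Finset.disjoint_left.1 hXdisj hvC) hvA,
      branchingBound_add_one_le hC.card_pos.ne' hI.card_pos.ne' ?_ ?_⟩
    · exact card_le_card (inter_subset_inter_left inter_subset_left)
    · simpa only [cliqueStep, inter_assoc] using hsparse
  · obtain ⟨huI, huA⟩ := mem_inter.1 hu
    have huC : u ∉ X_C := Finset.disjoint_right.1 hXdisj huI
    refine ⟨G.indepStep u (C, I, A), ⟨u, huA, .inr rfl⟩,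
      isPromising_indepStep hindep ht huI huC huA, ?_⟩
    rw [branchingBound_comm, branchingBound_comm #(X_C ∩ A)]
    refine branchingBound_add_one_le hI.card_pos.ne' hC.card_pos.ne' ?_ ?_
    · exact card_le_card (inter_subset_inter_left sdiff_subset)
    · have hsub : X_C ∩ (A \ insert u (G.neighborFinset u)) ⊆ (X_C ∩ A) \ G.neighborFinset u := by
        intro x
        simp only [mem_inter, mem_sdiff, mem_insert]
        tauto
      have := card_sdiff_add_card_inter (X_C ∩ A) (G.neighborFinset u)
      have := card_le_card hsub
      simp only [indepStep]
      omega

end SimpleGraph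

theorem SimpleGraph.exists_branching_sequence {G : SimpleGraph V} [DecidableRel G.Adj]
    {X_C X_I : Finset V} (hXdisj : Disjoint X_C X_I) (hclique : G.IsClique (X_C : Set V))
    (hindep : (X_I : Set V).Pairwise (fun u w => ¬ G.Adj u w))
    (t : Finset V × Finset V × Finset V) (ht : IsPromising X_C X_I t) :
    ∃ L : List (Finset V × Finset V × Finset V),
      L.head? = some t ∧ (∀ s ∈ L, IsPromising X_C X_I s) ∧ L.IsChain G.IsBranchingStep ∧
      (∀ s, L.getLast? = some s → IsTerminal X_C X_I s) ∧
      L.length ≤ branchingBound #(X_C ∩ t.2.2) #(X_I ∩ t.2.2) := by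
  by_cases hterm : IsTerminal X_C X_I t
  · exact ⟨[t], rfl, by simpa using ht, .singleton t, by simpa using hterm,
      one_le_branchingBound _ _⟩
  simp only [IsTerminal, not_or, ← nonempty_iff_ne_empty] at hterm
  obtain ⟨t', hstep, ht', hbound⟩ :=
    exists_isBranchingStep_branchingBound_lt hXdisj hclique hindep ht hterm.1 hterm.2
  obtain ⟨L, hhead, hprom, hchain, hlast, hlen⟩ :=
    exists_branching_sequence hXdisj hclique hindep t' ht'
  obtain ⟨L, rfl⟩ : ∃ L', L = t' :: L' := List.head?_eq_some_iff.1 hhead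
  refine ⟨t :: t' :: L, rfl, ?_, hchain.cons_cons hstep, by simpa using hlast, ?_⟩
  · simpa [ht] using hprom
  · simp only [List.length_cons] at hlen ⊢
    omega
termination_by #t.2.2
decreasing_by exact hstep.card_lt

end

theorem branching_reaches_terminal_state_general {V : Type*} [Fintype V] [DecidableEq V]
    (G : SimpleGraph V) [DecidableRel G.Adj] (n : ℕ) (hn : n = Fintype.card V)
    (X_C X_I : Finset V) (hXdisj : Disjoint X_C X_I)
    (hclique : G.IsClique (X_C : Set V))
    (hindep : (X_I : Set V).Pairwise (fun u w => ¬ G.Adj u w)) :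
    ∃ L : List (Finset V × Finset V × Finset V),
      L.length ≤ 2 * Nat.log 2 n + 1 ∧
      L.head? = some (∅, ∅, Finset.univ) ∧
      (∀ t ∈ L, (Disjoint t.1 t.2.1 ∧ Disjoint t.1 t.2.2 ∧ Disjoint t.2.1 t.2.2 ∧
        t.1 ∪ t.2.1 ∪ t.2.2 = Finset.univ) ∧
        X_C ⊆ t.1 ∪ t.2.2 ∧ X_I ⊆ t.2.1 ∪ t.2.2) ∧
      L.Chain' (fun t t' => ∃ v ∈ t.2.2,
        t' = (insert v t.1, t.2.1 ∪ (t.2.2 \ insert v (G.neighborFinset v)),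
              t.2.2 ∩ G.neighborFinset v) ∨
        t' = (t.1 ∪ (t.2.2 ∩ G.neighborFinset v), insert v t.2.1,
              t.2.2 \ insert v (G.neighborFinset v))) ∧
      (∀ t, L.getLast? = some t → X_C ∩ t.2.2 = ∅ ∨ X_I ∩ t.2.2 = ∅) := by
  have hstart : IsPromising X_C X_I (∅, ∅, univ) := by
    simp [IsPromising, IsTripartition]
  obtain ⟨L, hhead, hprom, hchain, hlast, hlen⟩ :=
    G.exists_branching_sequence hXdisj hclique hindep _ hstart
  have hcard : #(X_C ∩ univ) + #(X_I ∩ univ) ≤ n := by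
    rw [inter_univ, inter_univ, hn, ← card_union_of_disjoint hXdisj]
    exact card_le_univ _
  exact ⟨L, hlen.trans (branchingBound_le_of_add_le hcard), hhead, hprom, hchain, hlast⟩

/-- For every graph on `n ≥ 1` vertices and disjoint clique `X_C` and independent set `X_I`,
there is a sequence of at most `2⌊log₂ n⌋ + 1` states, starting at `(∅, ∅, V(G))`, in which
each state is a promising tripartition of `V(G)`, each state follows from the previous one by
a branching step on some active vertex, and the final state has `X_C ∩ A = ∅` or
`X_I ∩ A = ∅`. -/
theorem branching_reaches_terminal_state {V : Type*} [Fintype V] [DecidableEq V]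
    (G : SimpleGraph V) [DecidableRel G.Adj] (n : ℕ) (hn : n = Fintype.card V) (hn1 : 1 ≤ n)
    (X_C X_I : Finset V) (hXdisj : Disjoint X_C X_I)
    (hclique : G.IsClique (X_C : Set V))
    (hindep : (X_I : Set V).Pairwise (fun u w => ¬ G.Adj u w)) :
    ∃ L : List (Finset V × Finset V × Finset V),
      L.length ≤ 2 * Nat.log 2 n + 1 ∧
      L.head? = some (∅, ∅, Finset.univ) ∧
      (∀ t ∈ L, (Disjoint t.1 t.2.1 ∧ Disjoint t.1 t.2.2 ∧ Disjoint t.2.1 t.2.2 ∧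
        t.1 ∪ t.2.1 ∪ t.2.2 = Finset.univ) ∧
        X_C ⊆ t.1 ∪ t.2.2 ∧ X_I ⊆ t.2.1 ∪ t.2.2) ∧
      L.Chain' (fun t t' => ∃ v ∈ t.2.2,
        t' = (insert v t.1, t.2.1 ∪ (t.2.2 \ insert v (G.neighborFinset v)),
              t.2.2 ∩ G.neighborFinset v) ∨
        t' = (t.1 ∪ (t.2.2 ∩ G.neighborFinset v), insert v t.2.1,
              t.2.2 \ insert v (G.neighborFinset v))) ∧
      (∀ t, L.getLast? = some t → X_C ∩ t.2.2 = ∅ ∨ X_I ∩ t.2.2 = ∅) :=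
  branching_reaches_terminal_state_general G n hn X_C X_I hXdisj hclique hindep
end
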